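/- Superinduction satisfies Frobenius reciprocity for superclass functions: if H ≤ G are finite groups, G has a supercharacter theory, φ: H → ℂ is any function, and ψ: G → ℂ is a superclass function on G, then ⟨SInd_H^G(φ), ψ⟩_G = ⟨φ, Res_H^G(ψ)⟩_H. -/

import Mathlib

open scoped BigOperators
open Finset Classical

/-- The Frobenius scalar product `⟨f,g⟩ = (1/|X|) Σ_{x} conj(f(x)) g(x)`. -/
noncomputable def frobC (X : Type*) [Fintype X] (f g : X → ℂ) : ℂ :=
  (Fintype.card X : ℂ)⁻¹ * ∑ x : X, (starRingEnd ℂ) (f x) * g x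

/-- Extension by zero of `φ : H → ℂ` to `G`. -/
noncomputable def extZero {G : Type*} [Group G] (H : Subgroup G) (φ : H → ℂ) : G → ℂ :=
  fun g => if h : g ∈ H then φ ⟨g, h⟩ else 0

/-- Superinduction: `SInd_H^G(φ)(g) = (|G|/(|H|·|[g]|)) Σ_{k∈[g]} φ⁰(k)`, where `[g]`
is the superclass of `g`, given by the map `cls`. -/
noncomputable def SInd {G : Type*} [Group G] [Fintype G] (H : Subgroup G)
    (cls : G → Finset G) (φ : H → ℂ) : G → ℂ :=
  fun g => ((Fintype.card G : ℂ) / ((Nat.card H : ℂ) * ((cls g).card : ℂ))) *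
    ∑ k ∈ cls g, extZero H φ k

/-
Since `ψ` is constant on superclasses, `conj (SInd φ g) * ψ g` is `|G|/|H|` times the average of
`conj (φ⁰ k) * ψ k` over the superclass of `g`. Averaging a function over the blocks of a partition
does not change its total sum, so `|G| ⟨SInd φ, ψ⟩_G = (|G|/|H|) Σ_{g ∈ G} conj (φ⁰ g) ψ g`, and
the last sum only sees `H`.
-/

section Partition

variable {α : Type*} (cls : α → Finset α)

theorem mem_cls_symm (hmem : ∀ g, g ∈ cls g) (hcls : ∀ g h, h ∈ cls g → cls h = cls g)
    {g k : α} (hk : k ∈ cls g) : g ∈ cls k :=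
  hcls g k hk ▸ hmem g

theorem sum_inv_card_mul_sum_cls {K : Type*} [Fintype α] [Field K] [CharZero K]
    (hmem : ∀ g, g ∈ cls g) (hcls : ∀ g h, h ∈ cls g → cls h = cls g) (F : α → K) :
    ∑ g, ((cls g).card : K)⁻¹ * ∑ k ∈ cls g, F k = ∑ g, F g := by
  have hswap : ∑ g, ∑ k ∈ cls g, ((cls g).card : K)⁻¹ * F k
      = ∑ k, ∑ g ∈ cls k, ((cls g).card : K)⁻¹ * F k :=
    Finset.sum_comm' fun g k => by
      simpa using ⟨mem_cls_symm cls hmem hcls, mem_cls_symm cls hmem hcls⟩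
  simp only [Finset.mul_sum, hswap]
  refine Finset.sum_congr rfl fun k _ => ?_
  have hcard : ((cls k).card : K) ≠ 0 := by exact_mod_cast (Finset.card_pos.mpr ⟨k, hmem k⟩).ne'
  rw [Finset.sum_congr rfl fun g hg => by rw [hcls k g hg], Finset.sum_const, nsmul_eq_mul,
    ← mul_assoc, mul_inv_cancel₀ hcard, one_mul]

end Partition

theorem sum_extZero {G : Type*} [Group G] [Fintype G] (H : Subgroup G) (φ : H → ℂ) :
    ∑ g, extZero H φ g = ∑ h : H, φ h := by
  have hout : ∑ g : {g // g ∉ H}, extZero H φ g = 0 := Finset.sum_eq_zero fun g _ => dif_neg g.2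
  rw [← Fintype.sum_subtype_add_sum_subtype (· ∈ H), hout, add_zero]
  exact Finset.sum_congr rfl fun h _ => dif_pos h.2

theorem star_extZero_mul {G : Type*} [Group G] (H : Subgroup G) (φ : H → ℂ) (ψ : G → ℂ) (g : G) :
    starRingEnd ℂ (extZero H φ g) * ψ g
      = extZero H (fun h => starRingEnd ℂ (φ h) * ψ (h : G)) g := by
  by_cases hg : g ∈ H <;> simp [extZero, hg]

theorem star_SInd_mul {G : Type*} [Group G] [Fintype G] (H : Subgroup G) (cls : G → Finset G)
    (φ : H → ℂ) (ψ : G → ℂ) (hψ : ∀ g h : G, h ∈ cls g → ψ h = ψ g) (g : G) :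
    starRingEnd ℂ (SInd H cls φ g) * ψ g
      = (Fintype.card G / Nat.card H : ℂ) *
        (((cls g).card : ℂ)⁻¹ * ∑ k ∈ cls g, starRingEnd ℂ (extZero H φ k) * ψ k) := by
  have hconst : ∑ k ∈ cls g, starRingEnd ℂ (extZero H φ k) * ψ k
      = (∑ k ∈ cls g, starRingEnd ℂ (extZero H φ k)) * ψ g := by
    rw [Finset.sum_mul]
    exact Finset.sum_congr rfl fun k hk => by rw [hψ g k hk]
  simp only [SInd, map_mul, map_sum, map_div₀, map_natCast, hconst]
  ring

theorem stmt3 (G : Type*) [Group G] [Fintype G] (H : Subgroup G)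
    (cls : G → Finset G)
    -- `cls` assigns to each element its superclass; the superclasses partition `G`
    (hmem : ∀ g : G, g ∈ cls g)
    (hcls : ∀ g h : G, h ∈ cls g → cls h = cls g)
    (φ : H → ℂ) (ψ : G → ℂ)
    -- `ψ` is a superclass function
    (hψ : ∀ g h : G, h ∈ cls g → ψ h = ψ g) :
    frobC G (SInd H cls φ) ψ = frobC H φ (fun x : H => ψ (x : G)) := by
  have hG : (Fintype.card G : ℂ) ≠ 0 := by exact_mod_cast Fintype.card_ne_zero
  have hH : (Fintype.card H : ℂ) ≠ 0 := by exact_mod_cast Fintype.card_ne_zero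
  simp only [frobC, star_SInd_mul H cls φ ψ hψ, ← Finset.mul_sum,
    sum_inv_card_mul_sum_cls cls hmem hcls, star_extZero_mul, sum_extZero, Nat.card_eq_fintype_card]
  field_simp
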